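/- For any j = 1, …, k, the map A_{k−j+1} → S^{2(n−j)+1} sending an isometric linear map f: ℂ^k → ℂ^n to the image f(e_j) of the basis vector e_j is a fiber bundle whose fiber over the point i·e_j is A_{k−j}. -/

import Mathlib

open Metric

noncomputable section

/-- The space of continuous `ℂ`-linear maps `ℂ^k → ℂ^n`. -/
abbrev CLMSpace (k n : ℕ) : Type :=
  EuclideanSpace ℂ (Fin k) →L[ℂ] EuclideanSpace ℂ (Fin n)

/-- The `i`-th standard basis vector of `ℂ^k`. -/
abbrev basisVec (k : ℕ) (i : Fin k) : EuclideanSpace ℂ (Fin k) :=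
  EuclideanSpace.single i 1

/-- The Stiefel manifold `V_k(ℂ^n)`, as the set of isometric `ℂ`-linear maps. -/
def stiefelSet (k n : ℕ) : Set (CLMSpace k n) :=
  {f | ∀ x, ‖f x‖ = ‖x‖}

/-- The set `A_{k−j} ⊂ V_k(ℂ^n)` of isometric linear maps sending the first `j` basis
vectors `e_1, …, e_j` to `i·e_1, …, i·e_j`. -/
def setA (k n j : ℕ) (hkn : k ≤ n) : Set (CLMSpace k n) :=
  {f ∈ stiefelSet k n | ∀ i : Fin k, (i : ℕ) < j →
    f (basisVec k i) = Complex.I • basisVec n (Fin.castLE hkn i)}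

/-- The unit sphere of the subspace of `ℂ^n` of vectors orthogonal to `e_1, …, e_j`
(a sphere of dimension `2(n−j)−1`). -/
def baseSphere (n j : ℕ) : Set (EuclideanSpace ℂ (Fin n)) :=
  {v | ‖v‖ = 1 ∧ ∀ i : Fin n, (i : ℕ) < j → inner ℂ (basisVec n i) v = (0 : ℂ)}

/-- `p : Z → E` is a fiber bundle over the subset `B ⊆ E` with fiber `F`: the range of `p`
lies in `B`, and every point of `B` has a relatively open neighbourhood `U ⊆ B` over which
`p` is trivial with fiber `F`. -/
def IsFiberBundleOn {Z E : Type} [TopologicalSpace Z] [TopologicalSpace E]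
    (p : Z → E) (B : Set E) (F : Type) [TopologicalSpace F] : Prop :=
  Set.range p ⊆ B ∧
    ∀ b ∈ B, ∃ U : Set E, (∃ V : Set E, IsOpen V ∧ U = V ∩ B) ∧ b ∈ U ∧
      ∃ e : {z : Z // p z ∈ U} ≃ₜ U × F, ∀ z, ((e z).1 : E) = p z.1

/-!
The unitary maps of `ℂ^n` fixing `e_1, …, e_{j-1}` act by postcomposition on `A_{k-j+1}` and on
the sphere, compatibly with evaluation at `e_j`, and `A_{k-j}` is the fiber over `a = i e_j`.
Hence a continuous local section `u ↦ σ u` (with `σ u a = u`) of this action over `U`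
trivializes the evaluation map over `U` by `f ↦ (f e_j, (σ (f e_j))⁻¹ ∘ f)`. Such sections are
`σ u = planeRot c u ∘ planeRot a c`, built from the unitary "plane rotations" taking one unit vector
to another, which depend continuously on `u` as long as `⟪u, c⟫ ≠ -1`; the two choices `c = a`
and `c = i a` cover the whole sphere.
-/

section PlaneRot

variable {E : Type*} [NormedAddCommGroup E] [InnerProductSpace ℂ E]

local notation "⟪" x ", " y "⟫" => @inner ℂ _ _ x y

/-- For unit vectors `a`, `v` with `⟪v, a⟫ ≠ -1`, the unitary map taking `a` to `v` that acts on
the plane spanned by `a` and `v` and fixes its orthogonal complement; over `ℝ` this is the rotation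
`x ↦ x - ⟪a + v, x⟫ / (1 + ⟪a, v⟫) • (a + v) + 2 ⟪a, x⟫ • v`. -/
def planeRot (a v : E) : E →L[ℂ] E :=
  ContinuousLinearMap.id ℂ E
    - (1 + ⟪v, a⟫)⁻¹ • ((innerSL ℂ a + innerSL ℂ v).smulRight (a + v))
    + (2 : ℂ) • ((innerSL ℂ a).smulRight v)

lemma planeRot_apply (a v x : E) :
    planeRot a v x =
      x - ((1 + ⟪v, a⟫)⁻¹ * (⟪a, x⟫ + ⟪v, x⟫)) • (a + v) + (2 * ⟪a, x⟫) • v := by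
  simp [planeRot, smul_smul]

lemma one_add_inner_ne_zero_comm {x y : E} (h : 1 + ⟪x, y⟫ ≠ 0) : 1 + ⟪y, x⟫ ≠ 0 := by
  rwa [← inner_conj_symm, ← map_one (starRingEnd ℂ), ← map_add, map_ne_zero]

lemma planeRot_apply_self {a v : E} (ha : ⟪a, a⟫ = 1) (hd : 1 + ⟪v, a⟫ ≠ 0) :
    planeRot a v a = v := by
  rw [planeRot_apply, ha]
  match_scalars <;> field_simp <;> ring

lemma planeRot_apply_of_inner_eq_zero {a v x : E} (ha : ⟪a, x⟫ = 0) (hv : ⟪v, x⟫ = 0) :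
    planeRot a v x = x := by
  simp [planeRot_apply, ha, hv]

lemma planeRot_planeRot {a v : E} (ha : ⟪a, a⟫ = 1) (hv : ⟪v, v⟫ = 1) (hd : 1 + ⟪v, a⟫ ≠ 0)
    (x : E) : planeRot v a (planeRot a v x) = x := by
  have hd' := one_add_inner_ne_zero_comm hd
  rw [planeRot_apply, planeRot_apply]
  simp only [inner_add_right, inner_sub_right, inner_smul_right, ha, hv]
  match_scalars <;> field_simp <;> ring

lemma norm_planeRot_apply {a v : E} (ha : ‖a‖ = 1) (hv : ‖v‖ = 1) (hd : 1 + ⟪v, a⟫ ≠ 0)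
    (x : E) : ‖planeRot a v x‖ = ‖x‖ := by
  have haa := inner_self_eq_one_of_norm_eq_one (𝕜 := ℂ) ha
  have hvv := inner_self_eq_one_of_norm_eq_one (𝕜 := ℂ) hv
  have hd' := one_add_inner_ne_zero_comm hd
  have h : ⟪planeRot a v x, planeRot a v x⟫ = ⟪x, x⟫ := by
    rw [planeRot_apply]
    simp only [inner_add_left, inner_add_right, inner_sub_left, inner_sub_right,
      inner_smul_left, inner_smul_right, map_mul, map_add, map_inv₀, map_one, map_ofNat,
      inner_conj_symm, haa, hvv]
    field_simp
    ring
  rw [norm_eq_sqrt_re_inner (𝕜 := ℂ), h, ← norm_eq_sqrt_re_inner (𝕜 := ℂ)]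

lemma ContinuousOn.planeRot {X : Type*} [TopologicalSpace X] {f g : X → E} {s : Set X}
    (hf : ContinuousOn f s) (hg : ContinuousOn g s) (h : ∀ x ∈ s, 1 + ⟪g x, f x⟫ ≠ 0) :
    ContinuousOn (fun x => planeRot (f x) (g x)) s := by
  have hsmulRight : Continuous fun q : (E →L[ℂ] ℂ) × E => q.1.smulRight q.2 :=
    isBoundedBilinearMap_smulRight.continuous
  have hinnerSL : Continuous fun x : E => innerSL ℂ x := (innerSL ℂ).continuous
  have hinv : ContinuousOn (fun x => (1 + ⟪g x, f x⟫)⁻¹) s :=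
    (continuousOn_const.add (hg.inner hf)).inv₀ h
  refine (continuousOn_const.sub (hinv.smul ?_)).add (ContinuousOn.const_smul ?_ (2 : ℂ))
  · exact hsmulRight.comp_continuousOn
      (((hinnerSL.comp_continuousOn hf).add (hinnerSL.comp_continuousOn hg)).prodMk (hf.add hg))
  · exact hsmulRight.comp_continuousOn ((hinnerSL.comp_continuousOn hf).prodMk hg)

end PlaneRot

section LocalSection

variable {𝕜 E F : Type*} [NontriviallyNormedField 𝕜] [NormedAddCommGroup E] [NormedSpace 𝕜 E]
  [NormedAddCommGroup F] [NormedSpace 𝕜 F]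

theorem exists_homeomorph_of_localSection {Z A : Set (E →L[𝕜] F)} {x : E} {U : Set F}
    {σ σ' : F → F →L[𝕜] F} (hσ : ContinuousOn σ U) (hσ' : ContinuousOn σ' U)
    (hσσ' : ∀ u ∈ U, ∀ y, σ u (σ' u y) = y) (hσ'σ : ∀ u ∈ U, ∀ y, σ' u (σ u y) = y)
    (hσ_mem : ∀ u ∈ U, ∀ g ∈ A, σ u ∘L g ∈ Z) (hσ_apply : ∀ u ∈ U, ∀ g ∈ A, σ u (g x) = u)
    (hσ'_mem : ∀ f ∈ Z, f x ∈ U → σ' (f x) ∘L f ∈ A) :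
    ∃ e : {f : Z // (f : E →L[𝕜] F) x ∈ U} ≃ₜ U × A,
      ∀ f, ((e f).1 : F) = (f.1 : E →L[𝕜] F) x := by
  have hval : Continuous fun f : {f : Z // (f : E →L[𝕜] F) x ∈ U} => (f.1 : E →L[𝕜] F) :=
    continuous_subtype_val.comp continuous_subtype_val
  have heval := hval.clm_apply (continuous_const (y := x))
  refine ⟨{
    toFun := fun f => (⟨_, f.2⟩, ⟨_, hσ'_mem _ f.1.2 f.2⟩)
    invFun := fun w => ⟨⟨_, hσ_mem _ w.1.2 _ w.2.2⟩, by simp [hσ_apply _ w.1.2 _ w.2.2]⟩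
    left_inv := fun f => by ext y; simp [hσσ' _ f.2]
    right_inv := fun w => by
      ext y
      · simp [hσ_apply _ w.1.2 _ w.2.2]
      · simp [hσ_apply _ w.1.2 _ w.2.2, hσ'σ _ w.1.2]
    continuous_toFun := ?_
    continuous_invFun := ?_ }, fun f => rfl⟩
  · exact (heval.subtype_mk _).prodMk
      (((hσ'.comp_continuous heval fun f => f.2).clm_comp hval).subtype_mk _)
  · have hσ_fst := hσ.comp_continuous (continuous_subtype_val.comp continuous_fst)
      fun w : U × A => w.1.2
    exact ((hσ_fst.clm_comp (continuous_subtype_val.comp continuous_snd)).subtype_mk _).subtype_mk _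

end LocalSection

def unitaryFixing (n m : ℕ) : Set (CLMSpace n n) :=
  {T ∈ stiefelSet n n | ∀ i : Fin n, (i : ℕ) < m → T (basisVec n i) = basisVec n i}

lemma comp_mem_setA {k n m : ℕ} {hkn : k ≤ n} {T : CLMSpace n n} {f : CLMSpace k n}
    (hT : T ∈ unitaryFixing n m) (hf : f ∈ setA k n m hkn) : T ∘L f ∈ setA k n m hkn :=
  ⟨fun x => (hT.1 (f x)).trans (hf.1 x), fun i hi => by
    simp [hf.2 i hi, hT.2 (Fin.castLE hkn i) hi]⟩

lemma inner_apply_apply_of_mem_stiefelSet {k n : ℕ} {f : CLMSpace k n} (hf : f ∈ stiefelSet k n)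
    (x y : EuclideanSpace ℂ (Fin k)) : inner ℂ (f x) (f y) = inner ℂ x y :=
  LinearIsometry.inner_map_map ⟨f.toLinearMap, hf⟩ x y

lemma inner_eq_zero_of_mem_baseSphere {n m : ℕ} {v : EuclideanSpace ℂ (Fin n)}
    (hv : v ∈ baseSphere n m) {i : Fin n} (hi : (i : ℕ) < m) :
    inner ℂ v (basisVec n i) = 0 :=
  inner_eq_zero_symm.mp (hv.2 i hi)

lemma planeRot_mem_unitaryFixing {n m : ℕ} {a v : EuclideanSpace ℂ (Fin n)}
    (ha : a ∈ baseSphere n m) (hv : v ∈ baseSphere n m) (hd : 1 + inner ℂ v a ≠ 0) :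
    planeRot a v ∈ unitaryFixing n m :=
  ⟨norm_planeRot_apply ha.1 hv.1 hd, fun _ hi => planeRot_apply_of_inner_eq_zero
    (inner_eq_zero_of_mem_baseSphere ha hi) (inner_eq_zero_of_mem_baseSphere hv hi)⟩

lemma smul_mem_baseSphere {n m : ℕ} {v : EuclideanSpace ℂ (Fin n)} (hv : v ∈ baseSphere n m)
    {c : ℂ} (hc : ‖c‖ = 1) : c • v ∈ baseSphere n m :=
  ⟨by rw [norm_smul, hc, hv.1, one_mul], fun i hi => by rw [inner_smul_right, hv.2 i hi, mul_zero]⟩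

lemma smul_basisVec_mem_baseSphere {n m : ℕ} {i : Fin n} (hi : m ≤ (i : ℕ)) {c : ℂ}
    (hc : ‖c‖ = 1) : c • basisVec n i ∈ baseSphere n m := by
  refine smul_mem_baseSphere ⟨by simp, fun i' hi' => ?_⟩ hc
  simp [EuclideanSpace.inner_single_left, Fin.ne_of_lt (hi'.trans_le hi)]

lemma apply_basisVec_mem_baseSphere {k n m : ℕ} {hkn : k ≤ n} {f : CLMSpace k n}
    (hf : f ∈ setA k n m hkn) (hm : m < k) : f (basisVec k ⟨m, hm⟩) ∈ baseSphere n m := by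
  refine ⟨by simp [hf.1 _], fun i hi => ?_⟩
  have hik : (i : ℕ) < k := hi.trans hm
  have h := inner_apply_apply_of_mem_stiefelSet hf.1 (basisVec k ⟨i, hik⟩) (basisVec k ⟨m, hm⟩)
  rw [hf.2 ⟨i, hik⟩ hi, inner_smul_left] at h
  simpa [EuclideanSpace.inner_single_left, hi.ne] using h

lemma setA_succ {k n m : ℕ} (hkn : k ≤ n) (hm : m < k) :
    setA k n (m + 1) hkn = {f ∈ setA k n m hkn |
      f (basisVec k ⟨m, hm⟩) = Complex.I • basisVec n (Fin.castLE hkn ⟨m, hm⟩)} := by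
  ext f
  constructor
  · rintro ⟨hf, h⟩
    exact ⟨⟨hf, fun i hi => h i (Nat.lt_succ_of_lt hi)⟩, h _ (Nat.lt_succ_self m)⟩
  · rintro ⟨⟨hf, h⟩, hlast⟩
    refine ⟨hf, fun i hi => ?_⟩
    rcases Nat.lt_succ_iff_lt_or_eq.mp hi with hi | hi
    · exact h i hi
    · obtain rfl : i = ⟨m, hm⟩ := Fin.ext hi
      exact hlast

lemma exists_mem_baseSphere_one_add_inner_ne_zero {n m : ℕ} {a : EuclideanSpace ℂ (Fin n)}
    (ha : a ∈ baseSphere n m) (b : EuclideanSpace ℂ (Fin n)) :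
    ∃ c ∈ baseSphere n m, 1 + inner ℂ c a ≠ 0 ∧ 1 + inner ℂ b c ≠ 0 := by
  have haa := inner_self_eq_one_of_norm_eq_one (𝕜 := ℂ) ha.1
  by_cases hba : 1 + inner ℂ b a = 0
  · refine ⟨Complex.I • a, smul_mem_baseSphere ha (by simp), ?_, ?_⟩
    · rw [inner_smul_left, haa]; simp [Complex.ext_iff]
    · rw [inner_smul_right, eq_neg_of_add_eq_zero_right hba]; simp [Complex.ext_iff]
  · exact ⟨a, ha, by rw [haa]; norm_num, hba⟩

theorem exists_homeomorph_setA {k n m : ℕ} (hkn : k ≤ n) (hm : m < k)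
    {c : EuclideanSpace ℂ (Fin n)} (hc : c ∈ baseSphere n m)
    (hca : 1 + inner ℂ c (Complex.I • basisVec n (Fin.castLE hkn ⟨m, hm⟩)) ≠ 0) :
    ∃ e : {f : setA k n m hkn // (f : CLMSpace k n) (basisVec k ⟨m, hm⟩) ∈
        {u | 1 + inner ℂ u c ≠ 0} ∩ baseSphere n m} ≃ₜ
        ↥({u | 1 + inner ℂ u c ≠ 0} ∩ baseSphere n m) × setA k n (m + 1) hkn,
      ∀ f, ((e f).1 : EuclideanSpace ℂ (Fin n)) = (f.1 : CLMSpace k n) (basisVec k ⟨m, hm⟩) := by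
  set a := Complex.I • basisVec n (Fin.castLE hkn ⟨m, hm⟩)
  have ha : a ∈ baseSphere n m := smul_basisVec_mem_baseSphere le_rfl (by simp)
  have haa := inner_self_eq_one_of_norm_eq_one (𝕜 := ℂ) ha.1
  have hcc := inner_self_eq_one_of_norm_eq_one (𝕜 := ℂ) hc.1
  have hac := one_add_inner_ne_zero_comm hca
  rw [setA_succ hkn hm]
  refine exists_homeomorph_of_localSection (σ := fun u => planeRot c u ∘L planeRot a c)
    (σ' := fun u => planeRot c a ∘L planeRot u c) ?_ ?_ ?_ ?_ ?_ ?_ ?_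
  · exact (continuousOn_const.planeRot continuousOn_id fun u hu => hu.1).clm_comp
      continuousOn_const
  · exact continuousOn_const.clm_comp
      (continuousOn_id.planeRot continuousOn_const fun u hu => one_add_inner_ne_zero_comm hu.1)
  · intro u hu y
    have huu := inner_self_eq_one_of_norm_eq_one (𝕜 := ℂ) hu.2.1
    simp only [ContinuousLinearMap.comp_apply]
    rw [planeRot_planeRot hcc haa hac, planeRot_planeRot huu hcc (one_add_inner_ne_zero_comm hu.1)]
  · intro u hu y
    have huu := inner_self_eq_one_of_norm_eq_one (𝕜 := ℂ) hu.2.1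
    simp only [ContinuousLinearMap.comp_apply]
    rw [planeRot_planeRot hcc huu hu.1, planeRot_planeRot haa hcc hca]
  · intro u hu g hg
    rw [ContinuousLinearMap.comp_assoc]
    exact comp_mem_setA (planeRot_mem_unitaryFixing hc hu.2 hu.1)
      (comp_mem_setA (planeRot_mem_unitaryFixing ha hc hca) hg.1)
  · intro u hu g hg
    simp only [ContinuousLinearMap.comp_apply]
    rw [hg.2, planeRot_apply_self haa hca, planeRot_apply_self hcc hu.1]
  · intro f hf hu
    have huu := inner_self_eq_one_of_norm_eq_one (𝕜 := ℂ) hu.2.1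
    rw [ContinuousLinearMap.comp_assoc]
    refine ⟨comp_mem_setA (planeRot_mem_unitaryFixing hc ha hac)
      (comp_mem_setA (planeRot_mem_unitaryFixing hu.2 hc (one_add_inner_ne_zero_comm hu.1)) hf), ?_⟩
    simp only [ContinuousLinearMap.comp_apply]
    rw [planeRot_apply_self huu (one_add_inner_ne_zero_comm hu.1), planeRot_apply_self hcc hac]

/-- The evaluation map `A_{k−j+1} → S^{2(n−j)+1}`, `f ↦ f(e_j)`, is a fiber bundle with
fiber `A_{k−j}`, and its fiber over the point `i·e_j` is exactly `A_{k−j}`. -/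
theorem setA_evaluation_isFiberBundle (k n j : ℕ) (hkn : k ≤ n) (hj1 : 1 ≤ j) (hjk : j ≤ k) :
    IsFiberBundleOn
      (fun f : ↥(setA k n (j - 1) hkn) =>
        (f : CLMSpace k n) (basisVec k ⟨j - 1, by omega⟩))
      (baseSphere n (j - 1)) ↥(setA k n j hkn) ∧
    {f ∈ setA k n (j - 1) hkn |
        f (basisVec k ⟨j - 1, by omega⟩) =
          Complex.I • basisVec n (Fin.castLE hkn ⟨j - 1, by omega⟩)} =
      setA k n j hkn := by
  obtain ⟨m, rfl⟩ : ∃ m, j = m + 1 := ⟨j - 1, by omega⟩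
  have hm : m < k := by omega
  simp only [Nat.add_sub_cancel]
  refine ⟨⟨?_, fun b hb => ?_⟩, (setA_succ hkn hm).symm⟩
  · rintro _ ⟨f, rfl⟩
    exact apply_basisVec_mem_baseSphere f.2 hm
  · obtain ⟨c, hc, hca, hbc⟩ := exists_mem_baseSphere_one_add_inner_ne_zero
      (smul_basisVec_mem_baseSphere (i := Fin.castLE hkn ⟨m, hm⟩) le_rfl Complex.norm_I) b
    refine ⟨_, ⟨_, ?_, rfl⟩, ⟨hbc, hb⟩, exists_homeomorph_setA hkn hm hc hca⟩
    exact isOpen_ne_fun (continuous_const.add (continuous_id.inner continuous_const))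
      continuous_const

end
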